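/- arXiv:1601.04840 — 2 statements merged into one kernel-verified Lean document; each statement's English description precedes it below -/
import Mathlib

section
/- The compositional inverse G(X) of the Prouhet–Thue–Morse series over F_2 satisfies X^3 G(X)^4 + (1+X) G(X) + X(X^2+1) = 0, equivalently X^3 G(X^4) + (1+X) G(X) + X^3 + X = 0. -/
open PowerSeries

/-!
Splitting `F = ∑ tₙ Xⁿ` into its even and odd parts, the recursion for `t` gives
`F = F(X²) + X · (F(X²) + 1/(1 - X²))`, and `F(X²) = F²` over `𝔽₂`; hence
`(1 - X²) F = (1 - X²)(1 + X) F² + X`. Substituting `G`, which sends `F` to `X` and `X` to `G`,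
gives `(1 - G²) X = (1 - G²)(1 + G) X² + G`, and multiplying by `1 + X + XG` yields the
quartic modulo `2`.
-/

namespace PowerSeries

variable {R : Type*} [CommRing R]

instance instCharP (p : ℕ) [CharP R p] : CharP R⟦X⟧ p :=
  charP_of_injective_ringHom C_injective p

theorem mk_eq_expand_two_add_X_mul_expand_two (u : ℕ → R) :
    mk u = expand 2 two_ne_zero (mk fun n => u (2 * n)) +
      X * expand 2 two_ne_zero (mk fun n => u (2 * n + 1)) := by
  ext n
  obtain ⟨m, rfl | rfl⟩ := Nat.even_or_odd' n
  · cases m with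
    | zero => simp
    | succ m => simp [coeff_succ_X_mul, coeff_expand, mul_add, Nat.dvd_add_right]
  · simp [coeff_succ_X_mul, coeff_expand]

theorem coeff_subst_eq_coeff_sum_range {f g : R⟦X⟧} (hg : constantCoeff g = 0) (k : ℕ) :
    coeff k (f.subst g) = coeff k (∑ n ∈ Finset.range (k + 1), C (coeff n f) * g ^ n) := by
  rw [coeff_subst' (.of_constantCoeff_zero' hg), map_sum]
  simp only [coeff_C_mul, smul_eq_mul]
  refine finsum_eq_sum_of_support_subset _ fun n hn => ?_
  simp only [Function.mem_support, Finset.coe_range, Set.mem_Iio] at hn ⊢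
  by_contra! hkn
  exact hn (by rw [X_pow_dvd_iff.mp (pow_dvd_pow_of_dvd (X_dvd_iff.2 hg) n) k (by omega), mul_zero])

theorem expand_zmod_pow_card (p : ℕ) [hp : Fact p.Prime] (n : ℕ) (f : (ZMod p)⟦X⟧) :
    expand (p ^ n) (pow_ne_zero n hp.out.ne_zero) f = f ^ p ^ n := by
  have hid : iterateFrobenius (ZMod p) p n = RingHom.id _ := by
    ext x
    simp [iterateFrobenius_def, ZMod.pow_card_pow]
  have h := MvPowerSeries.map_iterateFrobenius_expand p hp.out.ne_zero f n
  rwa [hid, MvPowerSeries.map_id] at h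

end PowerSeries

theorem quartic_of_quadratic {A : Type*} [CommRing A] [CharP A 2] {x g : A}
    (h : (1 - g ^ 2) * x = (1 - g ^ 2) * (1 + g) * x ^ 2 + g) :
    x ^ 3 * g ^ 4 + (1 + x) * g + x * (x ^ 2 + 1) = 0 := by
  linear_combination (norm := ring_nf) (1 + x + x * g) * h
  reduce_mod_char!

theorem thueMorse_quadratic {t : ℕ → ZMod 2} (he : ∀ n, t (2 * n) = t n)
    (ho : ∀ n, t (2 * n + 1) = 1 + t n) :
    (1 - X ^ 2) * mk t = (1 - X ^ 2) * (1 + X) * mk t ^ 2 + X := by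
  have hsq (f : (ZMod 2)⟦X⟧) : expand 2 two_ne_zero f = f ^ 2 := expand_zmod_pow_card 2 1 f
  have hgeom : expand 2 two_ne_zero (mk 1 : (ZMod 2)⟦X⟧) * (1 - X ^ 2) = 1 := by
    simpa [expand_X] using congrArg (expand 2 two_ne_zero) (mk_one_mul_one_sub_eq_one (ZMod 2))
  have hsplit := mk_eq_expand_two_add_X_mul_expand_two t
  simp only [he, ho] at hsplit
  rw [show (mk fun n => 1 + t n) = mk 1 + mk t from rfl, map_add, hsq] at hsplit
  linear_combination (1 - X ^ 2) * hsplit + X * hgeom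

theorem inverse_ptm_quartic_equation_general (t : ℕ → ZMod 2)
    (he : ∀ n, t (2 * n) = t n) (ho : ∀ n, t (2 * n + 1) = 1 + t n)
    (G : PowerSeries (ZMod 2)) (hG0 : constantCoeff G = 0)
    (hFG : ∀ k : ℕ, coeff k
      (∑ n ∈ Finset.range (k + 1), PowerSeries.C (t n) * G ^ n) =
      coeff k X) :
    X ^ 3 * G ^ 4 + (1 + X) * G + X * (X ^ 2 + 1) = 0 ∧
    X ^ 3 * (PowerSeries.mk fun n =>
        if n % 4 = 0 then coeff (n / 4) G else 0) +
      (1 + X) * G + X ^ 3 + X = 0 := by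
  have hG : HasSubst G := .of_constantCoeff_zero' hG0
  have hFG' : (mk t).subst G = X := by
    ext k
    simpa only [coeff_subst_eq_coeff_sum_range hG0, coeff_mk] using hFG k
  have hquadratic : (1 - G ^ 2) * X = (1 - G ^ 2) * (1 + G) * X ^ 2 + G := by
    simpa only [map_add, map_sub, map_mul, map_pow, map_one, coe_substAlgHom, hFG', subst_X hG]
      using congrArg (substAlgHom hG) (thueMorse_quadratic he ho)
  have hquartic := quartic_of_quadratic hquadratic
  have hG4 : (mk fun n => if n % 4 = 0 then coeff (n / 4) G else 0) = G ^ 4 := by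
    ext n
    rw [coeff_mk, show G ^ 4 = G ^ 2 ^ 2 by norm_num, ← expand_zmod_pow_card 2 2, coeff_expand]
    simp [Nat.dvd_iff_mod_eq_zero]
  exact ⟨hquartic, by rw [hG4]; linear_combination hquartic⟩

/-- The compositional inverse `G` of the Prouhet–Thue–Morse series over `𝔽₂`
satisfies `X³G⁴ + (1+X)G + X(X²+1) = 0`, equivalently
`X³G(X⁴) + (1+X)G(X) + X³ + X = 0`, where `G(X⁴)` is the series whose
`4n`-th coefficient is the `n`-th coefficient of `G` and whose other
coefficients vanish. -/
theorem inverse_ptm_quartic_equation (t : ℕ → ZMod 2) (h0 : t 0 = 0)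
    (he : ∀ n, t (2 * n) = t n) (ho : ∀ n, t (2 * n + 1) = 1 + t n)
    (G : PowerSeries (ZMod 2)) (hG0 : constantCoeff G = 0)
    (hFG : ∀ k : ℕ, coeff k
      (∑ n ∈ Finset.range (k + 1), PowerSeries.C (t n) * G ^ n) =
      coeff k X)
    (hGF : ∀ k : ℕ, coeff k
      (∑ n ∈ Finset.range (k + 1),
        PowerSeries.C (coeff n G) * (PowerSeries.mk t) ^ n) =
      coeff k X) :
    X ^ 3 * G ^ 4 + (1 + X) * G + X * (X ^ 2 + 1) = 0 ∧
    X ^ 3 * (PowerSeries.mk fun n =>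
        if n % 4 = 0 then coeff (n / 4) G else 0) +
      (1 + X) * G + X ^ 3 + X = 0 :=
  inverse_ptm_quartic_equation_general t he ho G hG0 hFG
end

section
/- Let a_n be the n-th element of {m ≥ 1 : c_m = 1}. Then liminf_{n→∞} a_n/n^2 = 1/6, limsup_{n→∞} a_n/n^2 = 1/2, and the set {a_n/n^2 : n ≥ 1} is dense in the interval [1/6, 1/2]. -/
/-!
Unwinding the recursion, `c m = 1` for `m ≥ 1` exactly when `⌈m/2⌉` is a sum of distinct powers
of `4`, i.e. lies in the range of the Moser–de Bruijn sequence `φ` (binary digits read in base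
`4`). Hence `a (2k) = 2 φ(k)` and `a (2k - 1) = 2 φ(k) - 1`, so `a n / n²` is `φ(k) / (2k²)` up to
`O(1/n)`. The bounds `k² + 2k ≤ 3 φ(k) ≤ 3k²` are attained at `k = 2^m - 1` and `k = 2^m`, which
gives the liminf and the limsup. For density, a target `s ∈ [1/3, 1]` for `φ(k) / k²` stays
bracketed between `lowerBracket k` and `upperBracket k` along a path of steps `k ↦ 2k` or
`k ↦ 2k + 1`, and the bracket has width `O(1/k)`.
-/

open Filter Topology

def moserDeBruijn (k : ℕ) : ℕ := Nat.ofDigits 4 (Nat.digits 2 k)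

@[simp] lemma moserDeBruijn_zero : moserDeBruijn 0 = 0 := rfl

@[simp] lemma moserDeBruijn_one : moserDeBruijn 1 = 1 := rfl

lemma moserDeBruijn_two_mul_add (k : ℕ) {b : ℕ} (hb : b < 2) :
    moserDeBruijn (2 * k + b) = 4 * moserDeBruijn k + b := by
  rcases Nat.eq_zero_or_pos (2 * k + b) with h | h
  · obtain ⟨rfl, rfl⟩ : k = 0 ∧ b = 0 := by omega
    rfl
  · rw [moserDeBruijn, Nat.digits_def' one_lt_two h, Nat.ofDigits_cons,
      Nat.mul_add_mod_self_left, Nat.mod_eq_of_lt hb,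
      show (2 * k + b) / 2 = k by omega, moserDeBruijn]
    ring

lemma moserDeBruijn_two_mul (k : ℕ) : moserDeBruijn (2 * k) = 4 * moserDeBruijn k :=
  moserDeBruijn_two_mul_add k zero_lt_two

lemma moserDeBruijn_two_mul_add_one (k : ℕ) :
    moserDeBruijn (2 * k + 1) = 4 * moserDeBruijn k + 1 :=
  moserDeBruijn_two_mul_add k one_lt_two

lemma moserDeBruijn_lt_succ (k : ℕ) : moserDeBruijn k < moserDeBruijn (k + 1) := by
  induction k using Nat.evenOddRec with
  | h0 => decide
  | h_even n _ => rw [moserDeBruijn_two_mul_add_one, moserDeBruijn_two_mul]; omega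
  | h_odd n ih =>
    rw [show 2 * n + 1 + 1 = 2 * (n + 1) by ring, moserDeBruijn_two_mul,
      moserDeBruijn_two_mul_add_one]
    omega

lemma moserDeBruijn_strictMono : StrictMono moserDeBruijn :=
  strictMono_nat_of_lt_succ moserDeBruijn_lt_succ

lemma moserDeBruijn_le_sq (k : ℕ) : moserDeBruijn k ≤ k ^ 2 := by
  induction k using Nat.evenOddRec with
  | h0 => rfl
  | h_even n ih => rw [moserDeBruijn_two_mul]; nlinarith
  | h_odd n ih => rw [moserDeBruijn_two_mul_add_one]; nlinarith [ih, Nat.zero_le n]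

lemma sq_add_two_mul_le_three_mul_moserDeBruijn (k : ℕ) :
    k ^ 2 + 2 * k ≤ 3 * moserDeBruijn k := by
  induction k using Nat.evenOddRec with
  | h0 => rfl
  | h_even n ih => rw [moserDeBruijn_two_mul]; nlinarith
  | h_odd n ih => rw [moserDeBruijn_two_mul_add_one]; nlinarith [ih, Nat.zero_le n]

lemma moserDeBruijn_two_pow (m : ℕ) : moserDeBruijn (2 ^ m) = (2 ^ m) ^ 2 := by
  induction m with
  | zero => rfl
  | succ m ih => rw [pow_succ', moserDeBruijn_two_mul, ih]; ring

lemma three_mul_moserDeBruijn_two_pow_sub_one (m : ℕ) :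
    3 * moserDeBruijn (2 ^ m - 1) = (2 ^ m - 1) ^ 2 + 2 * (2 ^ m - 1) := by
  induction m with
  | zero => rfl
  | succ m ih =>
    rw [show 2 ^ (m + 1) - 1 = 2 * (2 ^ m - 1) + 1 by rw [pow_succ']; have := m.one_le_two_pow; omega,
      moserDeBruijn_two_mul_add_one]
    nlinarith

lemma mem_range_moserDeBruijn_iff (u : ℕ) :
    u ∈ Set.range moserDeBruijn ↔ u % 4 < 2 ∧ u / 4 ∈ Set.range moserDeBruijn := by
  constructor
  · rintro ⟨k, rfl⟩
    rw [← Nat.div_add_mod k 2, moserDeBruijn_two_mul_add _ (Nat.mod_lt _ two_pos)]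
    exact ⟨by omega, k / 2, by omega⟩
  · rintro ⟨hu, k, hk⟩
    refine ⟨2 * k + u % 4, ?_⟩
    rw [moserDeBruijn_two_mul_add _ hu, hk]
    omega

lemma two_mul_mem_range_moserDeBruijn_iff (k : ℕ) :
    2 * k ∈ Set.range moserDeBruijn ↔ k % 2 = 0 ∧ k / 2 ∈ Set.range moserDeBruijn := by
  rw [mem_range_moserDeBruijn_iff, show 2 * k / 4 = k / 2 by omega]
  exact and_congr_left' (by omega)

lemma two_mul_add_one_mem_range_moserDeBruijn_iff (k : ℕ) :
    2 * k + 1 ∈ Set.range moserDeBruijn ↔ 2 * k ∈ Set.range moserDeBruijn := by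
  rw [mem_range_moserDeBruijn_iff, mem_range_moserDeBruijn_iff (2 * k),
    show (2 * k + 1) / 4 = 2 * k / 4 by omega]
  exact and_congr_left' (by omega)

lemma zmod_two_add_eq_one_iff (x y : ZMod 2) : x + y = 1 ↔ (x = 1 ↔ ¬y = 1) := by
  revert x y; decide

theorem eq_one_iff_mem_range_moserDeBruijn (c : ℕ → ZMod 2) (hc1 : c 1 = 1) (hc2 : c 2 = 1)
    (hc3 : c 3 = 0)
    (h40 : ∀ n : ℕ, 1 ≤ n → c (4 * n) = c (4 * n - 1))
    (h41 : ∀ n : ℕ, 1 ≤ n → c (4 * n + 1) = c (4 * n - 1))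
    (h42 : ∀ n : ℕ, 1 ≤ n → c (4 * n + 2) = c (4 * n - 1))
    (h43 : ∀ n : ℕ, 1 ≤ n → c (4 * n + 3) = c (4 * n - 1) + c n) {m : ℕ} (hm : 1 ≤ m) :
    c m = 1 ↔ (m + 1) / 2 ∈ Set.range moserDeBruijn := by
  induction m using Nat.strong_induction_on with
  | _ m ih =>
  have one_mem : 1 ∈ Set.range moserDeBruijn := ⟨1, rfl⟩
  have two_notMem : 2 ∉ Set.range moserDeBruijn := fun h =>
    absurd ((mem_range_moserDeBruijn_iff 2).1 h).1 (by norm_num)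
  obtain hm3 | ⟨n, r, hn, hr, rfl⟩ : m ≤ 3 ∨ ∃ n r, 1 ≤ n ∧ r < 4 ∧ m = 4 * n + r :=
    (le_or_gt m 3).imp_right fun h => ⟨m / 4, m % 4, by omega, by omega, by omega⟩
  · interval_cases m <;> simp [hc1, hc2, hc3, one_mem, two_notMem]
  have block_start : c (4 * n - 1) = 1 ↔ 2 * n ∈ Set.range moserDeBruijn := by
    rw [ih _ (by omega) (by omega), show (4 * n - 1 + 1) / 2 = 2 * n by omega]
  interval_cases r
  · rw [add_zero, h40 n hn, block_start, show (4 * n + 1) / 2 = 2 * n by omega]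
  · rw [h41 n hn, block_start, show (4 * n + 1 + 1) / 2 = 2 * n + 1 by omega,
      two_mul_add_one_mem_range_moserDeBruijn_iff]
  · rw [h42 n hn, block_start, show (4 * n + 2 + 1) / 2 = 2 * n + 1 by omega,
      two_mul_add_one_mem_range_moserDeBruijn_iff]
  · rw [h43 n hn, zmod_two_add_eq_one_iff, block_start, ih n (by omega) hn,
      show (4 * n + 3 + 1) / 2 = 2 * (n + 1) by omega, two_mul_mem_range_moserDeBruijn_iff,
      two_mul_mem_range_moserDeBruijn_iff]
    -- Of `n` and `n + 1` exactly one is even, and its half is `(n + 1) / 2`.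
    rcases Nat.mod_two_eq_zero_or_one n with h | h
    · rw [show (n + 1) / 2 = n / 2 by omega]
      simp only [h, show (n + 1) % 2 = 1 by omega, true_and, one_ne_zero, false_and, iff_false]
      exact iff_not_self
    · simp only [h, show (n + 1) % 2 = 0 by omega, true_and, one_ne_zero, false_and, false_iff,
        not_not]

theorem Nat.nth_eq_of_strictMono_of_range_eq {p : ℕ → Prop} {f : ℕ → ℕ} (hf : StrictMono f)
    (hrange : Set.range f = Set.ofPred p) (n : ℕ) : Nat.nth p n = f n := by
  have hinf : (Set.ofPred p).Infinite := hrange ▸ Set.infinite_range_of_injective hf.injective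
  have huniv : {n : ℕ | ∀ h : (Set.ofPred p).Finite, n < h.toFinset.card} = Set.univ :=
    Set.eq_univ_of_forall fun n h => absurd h hinf
  refine (Nat.eq_nth_of_strictMonoOn_of_mapsTo_of_surjOn f ?_ ?_ ?_ (huniv ▸ trivial)).symm <;>
    rw [huniv]
  · intro m hm
    obtain ⟨i, rfl⟩ := hrange.symm ▸ hm
    exact ⟨i, trivial, rfl⟩
  · exact fun i _ => hrange ▸ Set.mem_range_self i
  · exact hf.strictMonoOn _

theorem nth_succ_div_two_mem_range {f : ℕ → ℕ} (hf : StrictMono f) (hf0 : f 0 = 0) (n : ℕ) :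
    Nat.nth (fun m => 1 ≤ m ∧ (m + 1) / 2 ∈ Set.range f) n + (n + 1) % 2 = 2 * f (n / 2 + 1) := by
  have hpos (j : ℕ) : 1 ≤ f (j + 1) := by have := @hf 0 (j + 1) (by omega); omega
  set g : ℕ → ℕ := fun n => 2 * f (n / 2 + 1) - (n + 1) % 2 with hg
  have hg_even (k : ℕ) : g (2 * k) + 1 = 2 * f (k + 1) := by
    simp only [hg, Nat.mul_div_cancel_left k two_pos]; have := hpos k; omega
  have hg_odd (k : ℕ) : g (2 * k + 1) = 2 * f (k + 1) := by
    simp only [hg, show (2 * k + 1) / 2 = k by omega]; omega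
  have hg_mono : StrictMono g := by
    refine strictMono_nat_of_lt_succ fun n => ?_
    rcases Nat.even_or_odd' n with ⟨k, rfl | rfl⟩
    · have := hg_even k; have := hg_odd k; omega
    · show g (2 * k + 1) < g (2 * (k + 1))
      have := hg_odd k; have := hg_even (k + 1); have := @hf (k + 1) (k + 1 + 1) (by omega); omega
  have hg_range : Set.range g = Set.ofPred fun m => 1 ≤ m ∧ (m + 1) / 2 ∈ Set.range f := by
    ext m
    constructor
    · rintro ⟨i, rfl⟩
      rcases Nat.even_or_odd' i with ⟨k, rfl | rfl⟩
      · have := hg_even k; have := hpos k; exact ⟨by omega, k + 1, by omega⟩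
      · have := hg_odd k; have := hpos k; exact ⟨by omega, k + 1, by omega⟩
    · rintro ⟨hm, j, hj⟩
      obtain ⟨j, rfl⟩ : ∃ j', j = j' + 1 :=
        Nat.exists_eq_add_one.2 (Nat.pos_of_ne_zero fun h => by subst h; omega)
      rcases Nat.even_or_odd' m with ⟨t, rfl | rfl⟩
      · exact ⟨2 * j + 1, by have := hg_odd j; omega⟩
      · exact ⟨2 * j, by have := hg_even j; omega⟩
  rw [Nat.nth_eq_of_strictMono_of_range_eq hg_mono hg_range]
  rcases Nat.even_or_odd' n with ⟨k, rfl | rfl⟩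
  · have := hg_even k; rw [Nat.mul_div_cancel_left k two_pos]; omega
  · rw [hg_odd, show (2 * k + 1) / 2 = k by omega]; omega

section LimsupLiminf

variable {ι β : Type*} [ConditionallyCompleteLinearOrder β] [TopologicalSpace β] [OrderTopology β]
  {f : Filter ι} {u v : ι → β} {l : β}

theorem Filter.limsup_eq_of_eventually_le_of_frequently_ge (hv : Tendsto v f (𝓝 l))
    (hle : ∀ᶠ i in f, u i ≤ v i) (hge : ∃ᶠ i in f, l ≤ u i) : limsup u f = l := by
  have : f.NeBot := (frequently_true_iff_neBot f).1 (hge.mono fun _ _ => trivial)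
  refine le_antisymm ?_ (le_limsup_of_frequently_le hge (hv.isBoundedUnder_le.mono_le hle))
  calc limsup u f ≤ limsup v f :=
        limsup_le_limsup hle (IsCoboundedUnder.of_frequently_ge hge) hv.isBoundedUnder_le
    _ = l := hv.limsup_eq

theorem Filter.liminf_eq_of_eventually_ge_of_frequently_le (hv : Tendsto v f (𝓝 l))
    (hge : ∀ᶠ i in f, l ≤ u i) (hle : ∃ᶠ i in f, u i ≤ v i) : liminf u f = l := by
  have : f.NeBot := (frequently_true_iff_neBot f).1 (hle.mono fun _ _ => trivial)
  refine le_antisymm ?_ (le_liminf_of_le ?_ hge)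
  · calc liminf u f ≤ limsup v f :=
          liminf_le_limsup_of_frequently_le hle (isBoundedUnder_of_eventually_ge hge)
            hv.isBoundedUnder_le
      _ = l := hv.limsup_eq
  · obtain ⟨b, hb⟩ := hv.isBoundedUnder_le.eventually_le
    exact IsCoboundedUnder.of_frequently_le ((hle.and_eventually hb).mono fun _ h => h.1.trans h.2)

end LimsupLiminf

/-- `upperBracket` is invariant under `k ↦ 2k` and `lowerBracket` under `k ↦ 2k + 1` (it is the
limit of `upperBracket` along that map), so the two bracket the ratios `φ(k') / k'²` of the binary
extensions `k'` of `k`. -/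
noncomputable def upperBracket (k : ℕ) : ℝ := moserDeBruijn k / k ^ 2

noncomputable def lowerBracket (k : ℕ) : ℝ := (3 * moserDeBruijn k + 1) / (3 * (k + 1) ^ 2)

lemma upperBracket_two_mul (k : ℕ) : upperBracket (2 * k) = upperBracket k := by
  simp only [upperBracket, moserDeBruijn_two_mul]
  push_cast
  rw [mul_pow, ← mul_div_mul_left (moserDeBruijn k : ℝ) (k ^ 2) (four_ne_zero)]
  norm_num

lemma lowerBracket_two_mul_add_one (k : ℕ) : lowerBracket (2 * k + 1) = lowerBracket k := by
  simp only [lowerBracket, moserDeBruijn_two_mul_add_one]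
  push_cast
  rw [← mul_div_mul_left (3 * (moserDeBruijn k : ℝ) + 1) _ (four_ne_zero)]
  ring_nf

lemma lowerBracket_two_mul_le_upperBracket_two_mul_add_one (k : ℕ) :
    lowerBracket (2 * k) ≤ upperBracket (2 * k + 1) := by
  simp only [lowerBracket, upperBracket, moserDeBruijn_two_mul, moserDeBruijn_two_mul_add_one]
  push_cast
  rw [div_le_div_iff₀ (by positivity) (by positivity)]
  nlinarith [sq_nonneg (2 * (k : ℝ) + 1)]

lemma upperBracket_sub_lowerBracket_le {k : ℕ} (hk : 1 ≤ k) :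
    upperBracket k - lowerBracket k ≤ 2 / k := by
  have hφ : (moserDeBruijn k : ℝ) ≤ k ^ 2 := by exact_mod_cast moserDeBruijn_le_sq k
  have hk' : (1 : ℝ) ≤ k := by exact_mod_cast hk
  rw [upperBracket, lowerBracket, sub_le_iff_le_add, div_add_div _ _ (by positivity) (by positivity),
    div_le_div_iff₀ (by positivity) (by positivity)]
  nlinarith [mul_nonneg (Nat.cast_nonneg (α := ℝ) (moserDeBruijn k)) (sub_nonneg.2 hφ)]

lemma exists_lowerBracket_le_le_upperBracket {s : ℝ} (hs : s ∈ Set.Icc (1 / 3 : ℝ) 1) (L : ℕ) :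
    ∃ k, L < k ∧ lowerBracket k ≤ s ∧ s ≤ upperBracket k := by
  induction L with
  | zero => exact ⟨1, one_pos, by norm_num [lowerBracket, hs.1], by norm_num [upperBracket, hs.2]⟩
  | succ L ih =>
    obtain ⟨k, hLk, hlo, hhi⟩ := ih
    by_cases h : lowerBracket (2 * k) ≤ s
    · exact ⟨2 * k, by omega, h, upperBracket_two_mul k ▸ hhi⟩
    · refine ⟨2 * k + 1, by omega, lowerBracket_two_mul_add_one k ▸ hlo, ?_⟩
      exact (not_le.1 h).le.trans (lowerBracket_two_mul_le_upperBracket_two_mul_add_one k)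

theorem exists_tendsto_moserDeBruijn_div_sq {s : ℝ} (hs : s ∈ Set.Icc (1 / 3 : ℝ) 1) :
    ∃ κ : ℕ → ℕ, (∀ j, 1 ≤ κ j) ∧
      Tendsto (fun j => (moserDeBruijn (κ j) : ℝ) / κ j ^ 2) atTop (𝓝 s) := by
  choose κ hκ hlo hhi using exists_lowerBracket_le_le_upperBracket hs
  have hκ_top : Tendsto κ atTop atTop := tendsto_atTop_mono (fun j => (hκ j).le) tendsto_id
  have hgap : Tendsto (fun j => s + 2 / (κ j : ℝ)) atTop (𝓝 s) := by
    simpa using tendsto_const_nhds.add ((tendsto_const_div_atTop_nhds_zero_nat (2 : ℝ)).comp hκ_top)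
  refine ⟨κ, fun j => by have := hκ j; omega,
    tendsto_of_tendsto_of_tendsto_of_le_of_le tendsto_const_nhds hgap hhi fun j => ?_⟩
  show upperBracket (κ j) ≤ _
  linarith [upperBracket_sub_lowerBracket_le (k := κ j) (by have := hκ j; omega), hlo j]

lemma one_div_le_div_sq {p x n : ℕ} (hn : n ≠ 0) (h : n ^ 2 ≤ p * x) :
    1 / (p : ℝ) ≤ x / n ^ 2 := by
  have hp : p ≠ 0 := by rintro rfl; simp_all
  rw [div_le_div_iff₀ (by positivity) (by positivity)]
  exact_mod_cast (by linarith : 1 * n ^ 2 ≤ x * p)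

lemma div_sq_le_one_div_add_one_div {p x n : ℕ} (hp : p ≠ 0) (h : p * x ≤ n ^ 2 + p * n) :
    (x : ℝ) / n ^ 2 ≤ 1 / p + 1 / n := by
  rcases Nat.eq_zero_or_pos n with rfl | hn
  · simp
  rw [div_add_div _ _ (by positivity) (by positivity), div_le_div_iff₀ (by positivity) (by positivity)]
  exact_mod_cast (by nlinarith : x * (p * n) ≤ (1 * n + p * 1) * n ^ 2)

def IsDoubledMoserDeBruijn (a : ℕ → ℕ) : Prop :=
  ∀ n, 1 ≤ n → a n + n % 2 = 2 * moserDeBruijn ((n + 1) / 2)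

namespace IsDoubledMoserDeBruijn

variable {a : ℕ → ℕ}

lemma apply_two_mul (ha : IsDoubledMoserDeBruijn a) {k : ℕ}
    (hk : 1 ≤ k) : a (2 * k) = 2 * moserDeBruijn k := by
  have := ha (2 * k) (by omega)
  rwa [Nat.mul_mod_right, add_zero, show (2 * k + 1) / 2 = k by omega] at this

lemma apply_two_mul_add_one (ha : IsDoubledMoserDeBruijn a)
    (k : ℕ) : a (2 * k + 1) + 1 = 2 * moserDeBruijn (k + 1) := by
  have := ha (2 * k + 1) (by omega)
  rwa [Nat.mul_add_mod_self_left, show (2 * k + 1 + 1) / 2 = k + 1 by omega] at this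

lemma one_sixth_le_div_sq (ha : IsDoubledMoserDeBruijn a)
    {n : ℕ} (hn : 1 ≤ n) : 1 / 6 ≤ (a n : ℝ) / n ^ 2 := by
  suffices n ^ 2 ≤ 6 * a n by exact_mod_cast one_div_le_div_sq (by omega) this
  rcases Nat.even_or_odd' n with ⟨k, rfl | rfl⟩
  · have := sq_add_two_mul_le_three_mul_moserDeBruijn k
    rw [ha.apply_two_mul (by omega)]
    nlinarith
  · have := sq_add_two_mul_le_three_mul_moserDeBruijn (k + 1)
    have := ha.apply_two_mul_add_one k
    nlinarith

lemma div_sq_le_half_add (ha : IsDoubledMoserDeBruijn a)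
    {n : ℕ} (hn : 1 ≤ n) : (a n : ℝ) / n ^ 2 ≤ 1 / 2 + 1 / n := by
  suffices 2 * a n ≤ n ^ 2 + 2 * n by exact_mod_cast div_sq_le_one_div_add_one_div two_ne_zero this
  rcases Nat.even_or_odd' n with ⟨k, rfl | rfl⟩
  · have := moserDeBruijn_le_sq k
    rw [ha.apply_two_mul (by omega)]
    nlinarith
  · have := moserDeBruijn_le_sq (k + 1)
    have := ha.apply_two_mul_add_one k
    nlinarith

lemma frequently_half_le_div_sq
    (ha : IsDoubledMoserDeBruijn a) :
    ∃ᶠ n in atTop, 1 / 2 ≤ (a n : ℝ) / n ^ 2 := by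
  refine frequently_atTop.2 fun N => ⟨2 * 2 ^ N, by have := N.lt_two_pow_self; omega, ?_⟩
  refine one_div_le_div_sq (by positivity) (le_of_eq ?_)
  rw [ha.apply_two_mul Nat.one_le_two_pow, moserDeBruijn_two_pow]
  ring

lemma frequently_div_sq_le_sixth_add
    (ha : IsDoubledMoserDeBruijn a) :
    ∃ᶠ n in atTop, (a n : ℝ) / n ^ 2 ≤ 1 / 6 + 1 / n := by
  refine frequently_atTop.2 fun N => ⟨2 * (2 ^ (N + 1) - 1), ?_, ?_⟩
  · have := (N + 1).lt_two_pow_self; omega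
  refine div_sq_le_one_div_add_one_div (by norm_num) ?_
  have := three_mul_moserDeBruijn_two_pow_sub_one (N + 1)
  rw [ha.apply_two_mul (by have := (N + 1).lt_two_pow_self; omega)]
  nlinarith

lemma div_sq_two_mul (ha : IsDoubledMoserDeBruijn a)
    {k : ℕ} (hk : 1 ≤ k) :
    (a (2 * k) : ℝ) / ((2 * k : ℕ) : ℝ) ^ 2 = (moserDeBruijn k : ℝ) / k ^ 2 / 2 := by
  rw [ha.apply_two_mul hk]
  push_cast
  ring

end IsDoubledMoserDeBruijn

theorem a_ratio_liminf_limsup_dense_general (c : ℕ → ZMod 2) (hc1 : c 1 = 1) (hc2 : c 2 = 1) (hc3 : c 3 = 0)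
    (h40 : ∀ n : ℕ, 1 ≤ n → c (4 * n) = c (4 * n - 1))
    (h41 : ∀ n : ℕ, 1 ≤ n → c (4 * n + 1) = c (4 * n - 1))
    (h42 : ∀ n : ℕ, 1 ≤ n → c (4 * n + 2) = c (4 * n - 1))
    (h43 : ∀ n : ℕ, 1 ≤ n → c (4 * n + 3) = c (4 * n - 1) + c n)
    (a : ℕ → ℕ)
    (ha : ∀ n : ℕ, a (n + 1) = Nat.nth (fun m => 1 ≤ m ∧ c m = 1) n) :
    liminf (fun n : ℕ => (a n : ℝ) / (n : ℝ) ^ 2) atTop = 1 / 6 ∧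
    limsup (fun n : ℕ => (a n : ℝ) / (n : ℝ) ^ 2) atTop = 1 / 2 ∧
    Set.Icc (1 / 6 : ℝ) (1 / 2) ⊆
      closure {x : ℝ | ∃ n : ℕ, 1 ≤ n ∧ x = (a n : ℝ) / (n : ℝ) ^ 2} := by
  have hc : (fun m => 1 ≤ m ∧ c m = 1) = fun m => 1 ≤ m ∧ (m + 1) / 2 ∈ Set.range moserDeBruijn :=
    funext fun m => propext <| and_congr_right
      (eq_one_iff_mem_range_moserDeBruijn c hc1 hc2 hc3 h40 h41 h42 h43)
  have ha' : IsDoubledMoserDeBruijn a := by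
    intro n hn
    obtain ⟨n, rfl⟩ := Nat.exists_eq_add_of_le' hn
    rw [ha, hc, nth_succ_div_two_mem_range moserDeBruijn_strictMono moserDeBruijn_zero n,
      show (n + 1 + 1) / 2 = n / 2 + 1 by omega]
  have hv (l : ℝ) : Tendsto (fun n : ℕ => l + 1 / (n : ℝ)) atTop (𝓝 l) := by
    simpa using (tendsto_const_nhds (x := l)).add (tendsto_one_div_atTop_nhds_zero_nat (𝕜 := ℝ))
  refine ⟨liminf_eq_of_eventually_ge_of_frequently_le (hv _)
      ((eventually_ge_atTop 1).mono fun n => ha'.one_sixth_le_div_sq)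
      ha'.frequently_div_sq_le_sixth_add,
    limsup_eq_of_eventually_le_of_frequently_ge (hv _)
      ((eventually_ge_atTop 1).mono fun n => ha'.div_sq_le_half_add)
      ha'.frequently_half_le_div_sq, fun t ht => ?_⟩
  obtain ⟨κ, hκ, hlim⟩ := exists_tendsto_moserDeBruijn_div_sq (s := 2 * t)
    ⟨by linarith [ht.1], by linarith [ht.2]⟩
  have hlim' : Tendsto (fun j => (moserDeBruijn (κ j) : ℝ) / κ j ^ 2 / 2) atTop (𝓝 t) := by
    simpa using hlim.div_const (2 : ℝ)
  refine mem_closure_of_tendsto (hlim'.congr fun j => (ha'.div_sq_two_mul (hκ j)).symm) ?_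
  exact Eventually.of_forall fun j => ⟨2 * κ j, by have := hκ j; omega, rfl⟩

/-- For the increasing enumeration `a` of `{m ≥ 1 : c_m = 1}`:
`liminf aₙ/n² = 1/6`, `limsup aₙ/n² = 1/2`, and `{aₙ/n² : n ≥ 1}` is dense in
`[1/6, 1/2]`. -/
theorem a_ratio_liminf_limsup_dense (c : ℕ → ZMod 2) (hc0 : c 0 = 0) (hc1 : c 1 = 1) (hc2 : c 2 = 1) (hc3 : c 3 = 0)
    (h40 : ∀ n : ℕ, 1 ≤ n → c (4 * n) = c (4 * n - 1))
    (h41 : ∀ n : ℕ, 1 ≤ n → c (4 * n + 1) = c (4 * n - 1))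
    (h42 : ∀ n : ℕ, 1 ≤ n → c (4 * n + 2) = c (4 * n - 1))
    (h43 : ∀ n : ℕ, 1 ≤ n → c (4 * n + 3) = c (4 * n - 1) + c n)
    (a : ℕ → ℕ) (ha0 : a 0 = 0)
    (ha : ∀ n : ℕ, a (n + 1) = Nat.nth (fun m => 1 ≤ m ∧ c m = 1) n) :
    liminf (fun n : ℕ => (a n : ℝ) / (n : ℝ) ^ 2) atTop = 1 / 6 ∧
    limsup (fun n : ℕ => (a n : ℝ) / (n : ℝ) ^ 2) atTop = 1 / 2 ∧
    Set.Icc (1 / 6 : ℝ) (1 / 2) ⊆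
      closure {x : ℝ | ∃ n : ℕ, 1 ≤ n ∧ x = (a n : ℝ) / (n : ℝ) ^ 2} :=
  a_ratio_liminf_limsup_dense_general c hc1 hc2 hc3 h40 h41 h42 h43 a ha
end
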